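/- arXiv:2605.10474 — 2 statements merged into one kernel-verified Lean document; each statement's English description precedes it below -/
import Mathlib

section
/- Let PZ₁ ⊂ ℝ^{n×m} be the matrix polynomial zonotope with center C₁, dependent generators G₁(·,·,1),…,G₁(·,·,h₁), independent generators G_{I,1}(·,·,1),…,G_{I,1}(·,·,q₁), and exponent matrix E₁ ∈ ℕ^{p₁×h₁}, and let PZ₂ ⊂ ℝ^{n×m} be the matrix polynomial zonotope with center C₂, dependent generators G₂(·,·,1),…,G₂(·,·,h₂), independent generators G_{I,2}(·,·,1),…,G_{I,2}(·,·,q₂), and exponent matrix E₂ ∈ ℕ^{p₂×h₂}. Then the Minkowski sum {X₁ + X₂ : X₁ ∈ PZ₁, X₂ ∈ PZ₂} is exactly equal to the matrix polynomial zonotope with center C₁ + C₂, dependent generators G₁(·,·,1),…,G₁(·,·,h₁), G₂(·,·,1),…,G₂(·,·,h₂), independent generators G_{I,1}(·,·,1),…,G_{I,1}(·,·,q₁), G_{I,2}(·,·,1),…,G_{I,2}(·,·,q₂), and the block-diagonal exponent matrix [[E₁, 0], [0, E₂]] ∈ ℕ^{(p₁+p₂)×(h₁+h₂)} in which the first p₁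 parameters act only on the generators of PZ₁ and the last p₂ parameters act only on the generators of PZ₂. -/
/-- A matrix polynomial zonotope with center `C`, dependent generators `G`,
independent generators `GI`, and exponent matrix `E`: the set of all matrices
`C + ∑ i (∏ k (α k)^(E k i)) • G i + ∑ j (β j) • GI j` with `α k, β j ∈ [-1, 1]`. -/
def matPolyZono {n m : ℕ} {P H Q : Type} [Fintype P] [Fintype H] [Fintype Q]
    (C : Matrix (Fin n) (Fin m) ℝ)
    (G : H → Matrix (Fin n) (Fin m) ℝ)
    (GI : Q → Matrix (Fin n) (Fin m) ℝ)
    (E : P → H → ℕ) : Set (Matrix (Fin n) (Fin m) ℝ) :=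
  { X | ∃ (α : P → ℝ) (β : Q → ℝ),
      (∀ k, α k ∈ Set.Icc (-1 : ℝ) 1) ∧ (∀ j, β j ∈ Set.Icc (-1 : ℝ) 1) ∧
      X = C + ∑ i, (∏ k, (α k) ^ (E k i)) • G i + ∑ j, (β j) • GI j }

/-- Minkowski sum of two matrix polynomial zonotopes: `{X₁ + X₂ : X₁ ∈ PZ₁, X₂ ∈ PZ₂}`
is exactly the matrix polynomial zonotope with center `C₁ + C₂`, the dependent and
independent generators of both zonotopes concatenated, and the block-diagonal exponent
matrix `[[E₁, 0], [0, E₂]]`, in which the first `p₁` parameters act only on the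
generators of `PZ₁` and the last `p₂` parameters act only on the generators of `PZ₂`. -/
theorem minkowskiSum_matPolyZono {n m : ℕ} {p₁ h₁ q₁ p₂ h₂ q₂ : ℕ}
    (C₁ : Matrix (Fin n) (Fin m) ℝ)
    (G₁ : Fin h₁ → Matrix (Fin n) (Fin m) ℝ)
    (GI₁ : Fin q₁ → Matrix (Fin n) (Fin m) ℝ)
    (E₁ : Fin p₁ → Fin h₁ → ℕ)
    (C₂ : Matrix (Fin n) (Fin m) ℝ)
    (G₂ : Fin h₂ → Matrix (Fin n) (Fin m) ℝ)
    (GI₂ : Fin q₂ → Matrix (Fin n) (Fin m) ℝ)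
    (E₂ : Fin p₂ → Fin h₂ → ℕ) :
    { Y | ∃ X₁ ∈ matPolyZono C₁ G₁ GI₁ E₁, ∃ X₂ ∈ matPolyZono C₂ G₂ GI₂ E₂,
        Y = X₁ + X₂ } =
      matPolyZono (C₁ + C₂)
        (Sum.elim G₁ G₂)
        (Sum.elim GI₁ GI₂)
        (fun (k : Fin p₁ ⊕ Fin p₂) (i : Fin h₁ ⊕ Fin h₂) =>
          match k, i with
          | Sum.inl k₁, Sum.inl i₁ => E₁ k₁ i₁
          | Sum.inl _,  Sum.inr _  => 0
          | Sum.inr _,  Sum.inl _  => 0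
          | Sum.inr k₂, Sum.inr i₂ => E₂ k₂ i₂) := by
  ext Y
  constructor
  · rintro ⟨X₁, ⟨α₁, β₁, hα₁, hβ₁, rfl⟩, X₂, ⟨α₂, β₂, hα₂, hβ₂, rfl⟩, rfl⟩
    refine ⟨Sum.elim α₁ α₂, Sum.elim β₁ β₂, ?_, ?_, ?_⟩
    · rintro (k | k) <;> simp [hα₁, hα₂]
    · rintro (j | j) <;> simp [hβ₁, hβ₂]
    · rw [Fintype.sum_sum_type, Fintype.sum_sum_type]
      have h1 : ∀ i : Fin h₁,
          (∏ k : Fin p₁ ⊕ Fin p₂, Sum.elim α₁ α₂ k ^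
            (match k, (Sum.inl i : Fin h₁ ⊕ Fin h₂) with
              | Sum.inl k₁, Sum.inl i₁ => E₁ k₁ i₁
              | Sum.inl _,  Sum.inr _  => 0
              | Sum.inr _,  Sum.inl _  => 0
              | Sum.inr k₂, Sum.inr i₂ => E₂ k₂ i₂)) = ∏ k, α₁ k ^ E₁ k i := by
        intro i
        rw [Fintype.prod_sum_type]
        simp
      have h2 : ∀ i : Fin h₂,
          (∏ k : Fin p₁ ⊕ Fin p₂, Sum.elim α₁ α₂ k ^
            (match k, (Sum.inr i : Fin h₁ ⊕ Fin h₂) with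
              | Sum.inl k₁, Sum.inl i₁ => E₁ k₁ i₁
              | Sum.inl _,  Sum.inr _  => 0
              | Sum.inr _,  Sum.inl _  => 0
              | Sum.inr k₂, Sum.inr i₂ => E₂ k₂ i₂)) = ∏ k, α₂ k ^ E₂ k i := by
        intro i
        rw [Fintype.prod_sum_type]
        simp
      simp only [h1, h2, Sum.elim_inl, Sum.elim_inr]
      abel
  · rintro ⟨α, β, hα, hβ, rfl⟩
    refine ⟨C₁ + ∑ i, (∏ k, (α (Sum.inl k)) ^ (E₁ k i)) • G₁ i
        + ∑ j, (β (Sum.inl j)) • GI₁ j,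
      ⟨fun k => α (Sum.inl k), fun j => β (Sum.inl j),
        fun k => hα _, fun j => hβ _, rfl⟩,
      C₂ + ∑ i, (∏ k, (α (Sum.inr k)) ^ (E₂ k i))
        • G₂ i + ∑ j, (β (Sum.inr j)) • GI₂ j,
      ⟨fun k => α (Sum.inr k), fun j => β (Sum.inr j),
        fun k => hα _, fun j => hβ _, rfl⟩, ?_⟩
    rw [Fintype.sum_sum_type, Fintype.sum_sum_type]
    have h1 : ∀ i : Fin h₁,
        (∏ k : Fin p₁ ⊕ Fin p₂, α k ^
          (match k, (Sum.inl i : Fin h₁ ⊕ Fin h₂) with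
            | Sum.inl k₁, Sum.inl i₁ => E₁ k₁ i₁
            | Sum.inl _,  Sum.inr _  => 0
            | Sum.inr _,  Sum.inl _  => 0
            | Sum.inr k₂, Sum.inr i₂ => E₂ k₂ i₂)) = ∏ k, α (Sum.inl k) ^ E₁ k i := by
      intro i
      rw [Fintype.prod_sum_type]
      simp
    have h2 : ∀ i : Fin h₂,
        (∏ k : Fin p₁ ⊕ Fin p₂, α k ^
          (match k, (Sum.inr i : Fin h₁ ⊕ Fin h₂) with
            | Sum.inl k₁, Sum.inl i₁ => E₁ k₁ i₁
            | Sum.inl _,  Sum.inr _  => 0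
            | Sum.inr _,  Sum.inl _  => 0
            | Sum.inr k₂, Sum.inr i₂ => E₂ k₂ i₂)) = ∏ k, α (Sum.inr k) ^ E₂ k i := by
      intro i
      rw [Fintype.prod_sum_type]
      simp
    simp only [h1, h2, Sum.elim_inl, Sum.elim_inr]
    abel
end

section
/- Let PZ₁ ⊂ ℝ^{n×m} be the matrix polynomial zonotope with center C₁, dependent generators G₁(·,·,1),…,G₁(·,·,h₁), no independent generators, and exponent matrix E₁ ∈ ℕ^{p₁×h₁}, and let PZ₂ ⊂ ℝ^{m×l} be the matrix polynomial zonotope with center C₂, dependent generators G₂(·,·,1),…,G₂(·,·,h₂), no independent generators, and exponent matrix E₂ ∈ ℕ^{p₂×h₂}, where the parameter variables of PZ₁ and PZ₂ are disjoint. Then the matrix-product set {X₁·X₂ : X₁ ∈ PZ₁, X₂ ∈ PZ₂} is exactly equal to the matrix polynomial zonotope in ℝ^{n×l} over p₁ + p₂ parameters with center C₁·C₂, no independent generators, and dependent generators consisting of: the generators C₁·G₂(·,·,j) with exponent column (0, E₂(·,j)) for j = 1,…,h₂; the generators G₁(·,·,i)·C₂ with exponent column (E₁(·,i), 0) for i =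 1,…,h₁; and the generators G₁(·,·,i)·G₂(·,·,j) with exponent column (E₁(·,i), E₂(·,j)) for all i = 1,…,h₁ and j = 1,…,h₂. -/
lemma mul_expand {n m l h₁ h₂ : ℕ}
    (C₁ : Matrix (Fin n) (Fin m) ℝ) (G₁ : Fin h₁ → Matrix (Fin n) (Fin m) ℝ)
    (C₂ : Matrix (Fin m) (Fin l) ℝ) (G₂ : Fin h₂ → Matrix (Fin m) (Fin l) ℝ)
    (t : Fin h₁ → ℝ) (s : Fin h₂ → ℝ) :
    (C₁ + ∑ i, t i • G₁ i) * (C₂ + ∑ j, s j • G₂ j)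
      = C₁ * C₂ + (∑ j, s j • (C₁ * G₂ j) +
        (∑ i, t i • (G₁ i * C₂) + ∑ i, ∑ j, (t i * s j) • (G₁ i * G₂ j))) := by
  simp only [Matrix.add_mul, Matrix.mul_add, Matrix.sum_mul, Matrix.mul_sum,
    Matrix.smul_mul, Matrix.mul_smul, smul_smul, smul_add, Finset.smul_sum,
    Finset.sum_add_distrib, mul_comm]
  rw [Finset.sum_comm]
  abel

/-- Matrix multiplication of two matrix polynomial zonotopes (with no independent
generators and disjoint parameter variables): `{X₁·X₂ : X₁ ∈ PZ₁, X₂ ∈ PZ₂}` is exactly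
the matrix polynomial zonotope over `p₁ + p₂` parameters with center `C₁·C₂`, no
independent generators, and dependent generators `C₁·G₂ j` with exponent column
`(0, E₂(·,j))`, `G₁ i·C₂` with exponent column `(E₁(·,i), 0)`, and `G₁ i·G₂ j` with
exponent column `(E₁(·,i), E₂(·,j))`. -/
theorem mul_matPolyZono {n m l : ℕ} {p₁ h₁ p₂ h₂ : ℕ}
    (C₁ : Matrix (Fin n) (Fin m) ℝ)
    (G₁ : Fin h₁ → Matrix (Fin n) (Fin m) ℝ)
    (E₁ : Fin p₁ → Fin h₁ → ℕ)
    (C₂ : Matrix (Fin m) (Fin l) ℝ)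
    (G₂ : Fin h₂ → Matrix (Fin m) (Fin l) ℝ)
    (E₂ : Fin p₂ → Fin h₂ → ℕ) :
    { Y | ∃ X₁ ∈ matPolyZono C₁ G₁ (fun j : Fin 0 => j.elim0) E₁,
          ∃ X₂ ∈ matPolyZono C₂ G₂ (fun j : Fin 0 => j.elim0) E₂,
        Y = X₁ * X₂ } =
      matPolyZono (C₁ * C₂)
        (Sum.elim (fun j : Fin h₂ => C₁ * G₂ j)
          (Sum.elim (fun i : Fin h₁ => G₁ i * C₂)
            (fun ij : Fin h₁ × Fin h₂ => G₁ ij.1 * G₂ ij.2)))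
        (fun j : Fin 0 => j.elim0)
        (fun (k : Fin p₁ ⊕ Fin p₂)
             (g : Fin h₂ ⊕ (Fin h₁ ⊕ Fin h₁ × Fin h₂)) =>
          match k, g with
          | Sum.inl _,  Sum.inl _             => 0
          | Sum.inl k₁, Sum.inr (Sum.inl i)   => E₁ k₁ i
          | Sum.inl k₁, Sum.inr (Sum.inr ij)  => E₁ k₁ ij.1
          | Sum.inr k₂, Sum.inl j             => E₂ k₂ j
          | Sum.inr _,  Sum.inr (Sum.inl _)   => 0
          | Sum.inr k₂, Sum.inr (Sum.inr ij)  => E₂ k₂ ij.2) := by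
  ext Y
  simp only [Set.mem_setOf_eq, matPolyZono]
  constructor
  · rintro ⟨X₁, ⟨α₁, β₁, hα₁, -, rfl⟩, X₂, ⟨α₂, β₂, hα₂, -, rfl⟩, rfl⟩
    refine ⟨Sum.elim α₁ α₂, fun j => j.elim0, ?_, fun j => j.elim0, ?_⟩
    · rintro (k | k)
      exacts [hα₁ k, hα₂ k]
    · simp only [Fin.sum_univ_zero, add_zero, Fintype.sum_sum_type,
        Fintype.prod_sum_type, Sum.elim_inl, Sum.elim_inr, pow_zero,
        Finset.prod_const_one, one_mul, mul_one, Fintype.sum_prod_type]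
      exact mul_expand C₁ G₁ C₂ G₂ _ _
  · rintro ⟨α, -, hα, -, rfl⟩
    refine ⟨_, ⟨α ∘ Sum.inl, fun j => j.elim0, fun k => hα _, fun j => j.elim0, rfl⟩,
      _, ⟨α ∘ Sum.inr, fun j => j.elim0, fun k => hα _, fun j => j.elim0, rfl⟩, ?_⟩
    simp only [Fin.sum_univ_zero, add_zero, Fintype.sum_sum_type,
      Fintype.prod_sum_type, Sum.elim_inl, Sum.elim_inr, pow_zero,
      Finset.prod_const_one, one_mul, mul_one, Fintype.sum_prod_type,
      Function.comp]
    exact (mul_expand C₁ G₁ C₂ G₂ _ _).symm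
end
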